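/- arXiv:2501.12808 — 6 statements merged into one kernel-verified Lean document; each statement's English description precedes it below -/
import Mathlib

section
/- Let p > 1 and c > 0, and let E be a real normed vector space such that ‖z − ((1−t)·x₀ + t·x₁)‖^p ≤ (1−t)‖z − x₀‖^p + t‖z − x₁‖^p − c·t(1−t)‖x₀ − x₁‖^p for all x₀, x₁, z ∈ E and all t ∈ [0,1]. Let A ⊆ B be nonempty bounded subsets of E. Suppose c_A ∈ E and ρ_A ≥ 0 are such that A ⊆ closedBall(c_A, ρ_A) and ρ_A ≤ r whenever A ⊆ closedBall(x, r) for some x ∈ E and r ≥ 0, and suppose c_B ∈ E and ρ_B ≥ 0 satisfy the same two conditions with respect to B. Then c·‖c_B − c_A‖^p ≤ ρ_B^p − ρ_A^p. -/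
/-!
Moving the center of `A`'s ball a fraction `t` of the way towards `c_B`, the uniform convexity
inequality puts `A` (which lies in both balls) inside a ball of radius `R` with
`R^p = (1 - t) ρ_A^p + t ρ_B^p - c t (1 - t) ‖c_B - c_A‖^p`. Minimality of `ρ_A` gives
`ρ_A^p ≤ R^p`, i.e. `c (1 - t) ‖c_B - c_A‖^p ≤ ρ_B^p - ρ_A^p` for every `t ∈ (0, 1)`;
let `t → 0`.
-/

open Metric Set Filter Topology

theorem le_of_forall_mul_one_sub_le {a b : ℝ} (h : ∀ t ∈ Ioo (0 : ℝ) 1, a * (1 - t) ≤ b) :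
    a ≤ b := by
  have hlim : Tendsto (fun t : ℝ => a * (1 - t)) (𝓝[>] 0) (𝓝 a) := by
    have hcont : Continuous fun t : ℝ => a * (1 - t) := by fun_prop
    simpa using (hcont.tendsto 0).mono_left nhdsWithin_le_nhds
  exact le_of_tendsto hlim (eventually_of_mem (Ioo_mem_nhdsGT one_pos) h)

theorem rpow_le_of_forall_dist_rpow_le {X : Type*} [PseudoMetricSpace X] {A : Set X}
    {ρ p R : ℝ} (x : X) (hp : 0 < p) (hρ : 0 ≤ ρ) (hA : A.Nonempty)
    (hmin : ∀ (y : X) (r : ℝ), 0 ≤ r → A ⊆ closedBall y r → ρ ≤ r)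
    (hR : ∀ z ∈ A, dist z x ^ p ≤ R) : ρ ^ p ≤ R := by
  obtain ⟨z₀, hz₀⟩ := hA
  have hR₀ : 0 ≤ R := (Real.rpow_nonneg dist_nonneg p).trans (hR z₀ hz₀)
  have hball : A ⊆ closedBall x (R ^ p⁻¹) := fun z hz =>
    (Real.le_rpow_inv_iff_of_pos dist_nonneg hR₀ hp).mpr (hR z hz)
  exact (Real.le_rpow_inv_iff_of_pos hρ hR₀ hp).mp (hmin x _ (Real.rpow_nonneg hR₀ _) hball)

theorem norm_sub_convexCombination_rpow_le {E : Type*} [NormedAddCommGroup E]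
    [NormedSpace ℝ E] {p c : ℝ} (hp : 0 ≤ p)
    (hconv : ∀ x₀ x₁ z : E, ∀ t ∈ Icc (0 : ℝ) 1,
      ‖z - ((1 - t) • x₀ + t • x₁)‖ ^ p
        ≤ (1 - t) * ‖z - x₀‖ ^ p + t * ‖z - x₁‖ ^ p - c * t * (1 - t) * ‖x₀ - x₁‖ ^ p)
    {x₀ x₁ z : E} {r₀ r₁ t : ℝ} (ht : t ∈ Icc (0 : ℝ) 1)
    (h₀ : ‖z - x₀‖ ≤ r₀) (h₁ : ‖z - x₁‖ ≤ r₁) :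
    ‖z - ((1 - t) • x₀ + t • x₁)‖ ^ p
      ≤ (1 - t) * r₀ ^ p + t * r₁ ^ p - c * t * (1 - t) * ‖x₀ - x₁‖ ^ p := by
  have h₀p := mul_le_mul_of_nonneg_left (Real.rpow_le_rpow (norm_nonneg _) h₀ hp)
    (sub_nonneg.mpr ht.2)
  have h₁p := mul_le_mul_of_nonneg_left (Real.rpow_le_rpow (norm_nonneg _) h₁ hp) ht.1
  linarith [hconv x₀ x₁ z t ht]

theorem circumcenter_displacement_le_of_subset_general
    {E : Type*} [NormedAddCommGroup E] [NormedSpace ℝ E]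
    (p c : ℝ) (hp : 1 < p)
    (hconv : ∀ x₀ x₁ z : E, ∀ t ∈ Set.Icc (0:ℝ) 1,
      ‖z - ((1 - t) • x₀ + t • x₁)‖ ^ p
        ≤ (1 - t) * ‖z - x₀‖ ^ p + t * ‖z - x₁‖ ^ p - c * t * (1 - t) * ‖x₀ - x₁‖ ^ p)
    (A B : Set E) (hA : A.Nonempty) (hAB : A ⊆ B)
    (cA : E) (ρA : ℝ) (hρA : 0 ≤ ρA)
    (hAball : A ⊆ Metric.closedBall cA ρA)
    (hAmin : ∀ (x : E) (r : ℝ), 0 ≤ r → A ⊆ Metric.closedBall x r → ρA ≤ r)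
    (cB : E) (ρB : ℝ)
    (hBball : B ⊆ Metric.closedBall cB ρB) :
    c * ‖cB - cA‖ ^ p ≤ ρB ^ p - ρA ^ p := by
  have hp₀ : 0 < p := one_pos.trans hp
  refine le_of_forall_mul_one_sub_le fun t ht => ?_
  have hρA_le : ρA ^ p ≤ (1 - t) * ρA ^ p + t * ρB ^ p - c * t * (1 - t) * ‖cA - cB‖ ^ p := by
    refine rpow_le_of_forall_dist_rpow_le ((1 - t) • cA + t • cB) hp₀ hρA hA hAmin
      fun z hz => ?_
    rw [dist_eq_norm]
    exact norm_sub_convexCombination_rpow_le hp₀.le hconv (Ioo_subset_Icc_self ht)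
      (mem_closedBall_iff_norm.mp (hAball hz)) (mem_closedBall_iff_norm.mp (hBball (hAB hz)))
  rw [norm_sub_rev] at hρA_le
  have hscaled : t * (c * ‖cB - cA‖ ^ p * (1 - t)) ≤ t * (ρB ^ p - ρA ^ p) := by linarith
  exact le_of_mul_le_mul_left hscaled ht.1

theorem circumcenter_displacement_le_of_subset
    {E : Type*} [NormedAddCommGroup E] [NormedSpace ℝ E]
    (p c : ℝ) (hp : 1 < p) (hc : 0 < c)
    (hconv : ∀ x₀ x₁ z : E, ∀ t ∈ Set.Icc (0:ℝ) 1,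
      ‖z - ((1 - t) • x₀ + t • x₁)‖ ^ p
        ≤ (1 - t) * ‖z - x₀‖ ^ p + t * ‖z - x₁‖ ^ p - c * t * (1 - t) * ‖x₀ - x₁‖ ^ p)
    (A B : Set E) (hA : A.Nonempty) (hAB : A ⊆ B) (hB : Bornology.IsBounded B)
    (cA : E) (ρA : ℝ) (hρA : 0 ≤ ρA)
    (hAball : A ⊆ Metric.closedBall cA ρA)
    (hAmin : ∀ (x : E) (r : ℝ), 0 ≤ r → A ⊆ Metric.closedBall x r → ρA ≤ r)
    (cB : E) (ρB : ℝ) (hρB : 0 ≤ ρB)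
    (hBball : B ⊆ Metric.closedBall cB ρB)
    (hBmin : ∀ (x : E) (r : ℝ), 0 ≤ r → B ⊆ Metric.closedBall x r → ρB ≤ r) :
    c * ‖cB - cA‖ ^ p ≤ ρB ^ p - ρA ^ p :=
  circumcenter_displacement_le_of_subset_general p c hp hconv A B hA hAB cA ρA hρA hAball hAmin cB
    ρB hBball
end

section
/- Let G be a group with a symmetric subset S containing the identity, acting by (surjective) isometries on a metric space X, and let v ∈ X and n ≥ 1 be such that the orbit set S^n · v = {g·v : g ∈ S^n} is bounded. Define ρ_n(v) := inf{r ≥ 0 : S^n · v ⊆ closedBall(x, r) for some x ∈ X} and a_n(v) := sup_{g ∈ S^n} d(g·v, v). Then 2·ρ_n(v) ≥ a_{2n}(v) ≥ a_n(v) ≥ ρ_n(v). -/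
/-! If every element of `Sⁿ·v` lies within `r` of a point `x`, then for `g, h ∈ Sⁿ` the
isometry `g` carries `h·v` and `x` to `gh·v` and `g·x`, while `g·x` lies within `r` of
`v = g·(g⁻¹·v)`, because `g⁻¹ ∈ Sⁿ`. So `d(gh·v, v) ≤ 2r`, which gives `a_{2n} ≤ 2ρₙ`. The
other two inequalities are monotonicity of the supremum and the ball of radius `aₙ`
about `v`. -/

open Pointwise

noncomputable section

/-- The circumradius of a subset of a metric space: the infimum of the radii of closed
balls containing it. -/
def circumradius {X : Type*} [PseudoMetricSpace X] (A : Set X) : ℝ :=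
  sInf {r : ℝ | 0 ≤ r ∧ ∃ x : X, A ⊆ Metric.closedBall x r}

section circumradius

variable {X : Type*} [PseudoMetricSpace X] {A : Set X}

theorem circumradius_le_of_subset_closedBall {x : X} {r : ℝ} (hr : 0 ≤ r)
    (hA : A ⊆ Metric.closedBall x r) : circumradius A ≤ r :=
  csInf_le ⟨0, fun _ hs => hs.1⟩ ⟨hr, x, hA⟩

theorem le_circumradius_of_forall_subset_closedBall [Nonempty X] {c : ℝ}
    (hA : Bornology.IsBounded A)
    (h : ∀ r : ℝ, 0 ≤ r → ∀ x : X, A ⊆ Metric.closedBall x r → c ≤ r) :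
    c ≤ circumradius A := by
  obtain ⟨r, hr⟩ := hA.subset_closedBall (Classical.arbitrary X)
  exact le_csInf ⟨max r 0, le_max_right r 0, _, hr.trans (Metric.closedBall_subset_closedBall
    (le_max_left r 0))⟩ fun r ⟨hr, x, hx⟩ => h r hr x hx

theorem bddAbove_dist_image_of_isBounded {ι : Type*} {f : ι → X} {T : Set ι}
    (hT : Bornology.IsBounded (f '' T)) (v : X) :
    BddAbove ((fun i => dist (f i) v) '' T) := by
  obtain ⟨r, hr⟩ := hT.subset_closedBall v
  exact ⟨r, by rintro _ ⟨i, hi, rfl⟩; exact hr ⟨i, hi, rfl⟩⟩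

theorem circumradius_image_le_sSup_dist {ι : Type*} {f : ι → X} {T : Set ι}
    (hT : Bornology.IsBounded (f '' T)) (v : X) :
    circumradius (f '' T) ≤ sSup ((fun i => dist (f i) v) '' T) := by
  refine circumradius_le_of_subset_closedBall (x := v)
    (Real.sSup_nonneg (by rintro _ ⟨i, -, rfl⟩; exact dist_nonneg)) ?_
  rintro _ ⟨i, hi, rfl⟩
  exact le_csSup (bddAbove_dist_image_of_isBounded hT v) ⟨i, hi, rfl⟩

end circumradius

section isometricAction

variable {X : Type*} [PseudoMetricSpace X] {G : Type*} [Group G] (φ : G →* (X ≃ᵢ X))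

theorem dist_mul_apply_le (g h : G) (v x : X) :
    dist (φ (g * h) v) v ≤ dist (φ h v) x + dist (φ g⁻¹ v) x := by
  have hx : dist (φ g x) v = dist x (φ g⁻¹ v) := by
    rw [← (φ g).dist_eq x, map_inv, IsometryEquiv.apply_inv_self]
  calc dist (φ (g * h) v) v ≤ dist (φ (g * h) v) (φ g x) + dist (φ g x) v := dist_triangle _ _ _
    _ = dist (φ h v) x + dist x (φ g⁻¹ v) := by
      rw [map_mul, IsometryEquiv.mul_apply, (φ g).dist_eq, hx]
    _ = dist (φ h v) x + dist (φ g⁻¹ v) x := by rw [dist_comm x]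

theorem dist_apply_le_two_mul_of_image_subset_closedBall {T : Set G} (hT : T⁻¹ = T) {v x : X}
    {r : ℝ} (hr : (fun g => φ g v) '' T ⊆ Metric.closedBall x r) :
    ∀ g ∈ T * T, dist (φ g v) v ≤ 2 * r := by
  rintro _ ⟨g, hg, h, hh, rfl⟩
  have hg' : g⁻¹ ∈ T := by rwa [← Set.mem_inv, hT]
  calc dist (φ (g * h) v) v ≤ dist (φ h v) x + dist (φ g⁻¹ v) x := dist_mul_apply_le φ g h v x
    _ ≤ r + r := add_le_add (hr ⟨h, hh, rfl⟩) (hr ⟨g⁻¹, hg', rfl⟩)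
    _ = 2 * r := (two_mul r).symm

theorem bddAbove_dist_image_mul_self {T : Set G} (hT : T⁻¹ = T) {v : X}
    (hb : Bornology.IsBounded ((fun g => φ g v) '' T)) :
    BddAbove ((fun g => dist (φ g v) v) '' (T * T)) := by
  obtain ⟨r, hr⟩ := hb.subset_closedBall v
  exact ⟨2 * r, by
    rintro _ ⟨g, hg, rfl⟩; exact dist_apply_le_two_mul_of_image_subset_closedBall φ hT hr g hg⟩

theorem sSup_dist_mul_self_le_two_mul_circumradius {T : Set G} (hT : T⁻¹ = T) {v : X}
    (hb : Bornology.IsBounded ((fun g => φ g v) '' T)) :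
    sSup ((fun g => dist (φ g v) v) '' (T * T)) ≤ 2 * circumradius ((fun g => φ g v) '' T) := by
  have : Nonempty X := ⟨v⟩
  rw [← div_le_iff₀' two_pos]
  refine le_circumradius_of_forall_subset_closedBall hb fun r hr x hx => ?_
  rw [div_le_iff₀' two_pos]
  refine Real.sSup_le ?_ (by positivity)
  rintro _ ⟨g, hg, rfl⟩
  exact dist_apply_le_two_mul_of_image_subset_closedBall φ hT hx g hg

end isometricAction

theorem circumradius_le_sup_displacement_general
    {X : Type*} [MetricSpace X] {G : Type*} [Group G]
    (S : Set G) (hSsymm : S⁻¹ = S) (hSone : (1 : G) ∈ S)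
    (φ : G →* (X ≃ᵢ X)) (v : X) (n : ℕ)
    (hbdd : Bornology.IsBounded ((fun g => φ g v) '' (S ^ n))) :
    sSup ((fun g => dist (φ g v) v) '' (S ^ (2 * n)))
        ≤ 2 * circumradius ((fun g => φ g v) '' (S ^ n)) ∧
      sSup ((fun g => dist (φ g v) v) '' (S ^ n))
        ≤ sSup ((fun g => dist (φ g v) v) '' (S ^ (2 * n))) ∧
      circumradius ((fun g => φ g v) '' (S ^ n))
        ≤ sSup ((fun g => dist (φ g v) v) '' (S ^ n)) := by
  have hsymm : (S ^ n)⁻¹ = S ^ n := by rw [← inv_pow, hSsymm]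
  have hsq : S ^ (2 * n) = S ^ n * S ^ n := by rw [two_mul, pow_add]
  have hsub : S ^ n ⊆ S ^ (2 * n) := Set.pow_subset_pow_right hSone (by omega)
  refine ⟨hsq ▸ sSup_dist_mul_self_le_two_mul_circumradius φ hsymm hbdd, ?_,
    circumradius_image_le_sSup_dist hbdd v⟩
  exact csSup_le_csSup (hsq ▸ bddAbove_dist_image_mul_self φ hsymm hbdd)
    ⟨_, 1, Set.one_mem_pow hSone, rfl⟩ (Set.image_mono hsub)

theorem circumradius_le_sup_displacement
    {X : Type*} [MetricSpace X] {G : Type*} [Group G]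
    (S : Set G) (hSsymm : S⁻¹ = S) (hSone : (1 : G) ∈ S)
    (φ : G →* (X ≃ᵢ X)) (v : X) (n : ℕ) (hn : 1 ≤ n)
    (hbdd : Bornology.IsBounded ((fun g => φ g v) '' (S ^ n))) :
    sSup ((fun g => dist (φ g v) v) '' (S ^ (2 * n)))
        ≤ 2 * circumradius ((fun g => φ g v) '' (S ^ n)) ∧
      sSup ((fun g => dist (φ g v) v) '' (S ^ n))
        ≤ sSup ((fun g => dist (φ g v) v) '' (S ^ (2 * n))) ∧
      circumradius ((fun g => φ g v) '' (S ^ n))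
        ≤ sSup ((fun g => dist (φ g v) v) '' (S ^ n)) :=
  circumradius_le_sup_displacement_general S hSsymm hSone φ v n hbdd
end
end

section
/- Let G be a locally compact second countable topological group, E a separable real Banach space, and π : G → O(E) a strongly continuous isometric linear representation. Let b : G → E be a Borel measurable map satisfying the cocycle relation b(gh) = b(g) + π(g)b(h) for all g, h ∈ G. Then b is continuous. -/
open MeasureTheory Pointwise Filter Topology Set

/-!
Since `‖b (g⁻¹ * h)‖ = ‖b h - b g‖`, separability of `E` lets countably many left translates of the
Borel set `B = {g | ‖b g‖ < ε / 2}` cover `G`. Hence `B` has positive Haar measure, and by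
Steinhaus' theorem `B / B` is a neighbourhood of `1`, on which `‖b‖ < ε` because
`‖b (g / h)‖ ≤ ‖b g‖ + ‖b h‖`. So `b` is continuous at `1`, and `b h = b g + π g (b (g⁻¹ * h))`
carries continuity to every point.
-/

theorem div_mem_nhds_one_of_iUnion_smul_eq_univ {G : Type*} [Group G] [TopologicalSpace G]
    [IsTopologicalGroup G] [LocallyCompactSpace G] [MeasurableSpace G] [BorelSpace G] {s t : Set G}
    (hs : MeasurableSet s) (ht : t.Countable) (hcover : ⋃ g ∈ t, g • s = univ) :
    s / s ∈ 𝓝 (1 : G) := by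
  obtain ⟨K, hKc, hK1⟩ := exists_compact_mem_nhds (1 : G)
  set μ : Measure G := Measure.haar
  set U := interior K
  have hUpos : 0 < μ U := isOpen_interior.measure_pos μ ⟨1, mem_interior_iff_mem_nhds.2 hK1⟩
  obtain ⟨g, -, hg⟩ : ∃ g ∈ t, 0 < μ (U ∩ g • s) := by
    by_contra! h
    refine hUpos.ne' (measure_mono_null (t := ⋃ g ∈ t, U ∩ g • s) ?_ ?_)
    · rw [← inter_iUnion₂, hcover, inter_univ]
    · exact (measure_biUnion_null_iff ht).2 fun g hg => nonpos_iff_eq_zero.1 (h g hg)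
  -- Steinhaus' theorem wants finite measure, so cut `s` down by a translate of the
  -- relatively compact `U`.
  have hμ : μ (s ∩ g⁻¹ • U) = μ (U ∩ g • s) := by
    rw [← measure_smul μ g, smul_set_inter, smul_inv_smul, inter_comm]
  have hfin : μ (s ∩ g⁻¹ • U) ≠ ⊤ := by
    rw [hμ]
    exact ((measure_mono (inter_subset_left.trans interior_subset)).trans_lt
      hKc.measure_lt_top).ne
  have hsU := Measure.div_mem_nhds_one_of_haar_pos_ne_top μ _
    (hs.inter (isOpen_interior.smul g⁻¹).measurableSet) (hμ ▸ hg) hfin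
  exact mem_of_superset hsU (div_subset_div inter_subset_left inter_subset_left)

theorem exists_countable_range_subset_closure_image {α X : Type*} [TopologicalSpace X]
    [TopologicalSpace.PseudoMetrizableSpace X] [TopologicalSpace.SeparableSpace X] (f : α → X) :
    ∃ t : Set α, t.Countable ∧ range f ⊆ closure (f '' t) := by
  obtain ⟨c, hcf, hc, hfc⟩ :=
    (TopologicalSpace.IsSeparable.of_separableSpace (range f)).exists_countable_dense_subset
  obtain ⟨t, rfl, hinj⟩ := exists_image_eq_injOn_of_subset_range hcf
  exact ⟨t, countable_of_injective_of_countable_image hinj hc, hfc⟩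

def IsCocycle {𝕜 G E : Type*} [Semiring 𝕜] [Monoid G] [SeminormedAddCommGroup E] [Module 𝕜 E]
    (π : G →* (E ≃ₗᵢ[𝕜] E)) (b : G → E) : Prop :=
  ∀ g h, b (g * h) = b g + π g (b h)

namespace IsCocycle

variable {𝕜 G E : Type*} [Semiring 𝕜] [Group G] [SeminormedAddCommGroup E] [Module 𝕜 E]
  {π : G →* (E ≃ₗᵢ[𝕜] E)} {b : G → E}

theorem map_one (hb : IsCocycle π b) : b 1 = 0 := by
  simpa using hb 1 1

theorem map_eq_add_map_inv_mul (hb : IsCocycle π b) (g h : G) :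
    b h = b g + π g (b (g⁻¹ * h)) := by
  rw [← hb, mul_inv_cancel_left]

theorem norm_map_inv_mul (hb : IsCocycle π b) (g h : G) : ‖b (g⁻¹ * h)‖ = dist (b h) (b g) := by
  rw [dist_eq_norm, hb.map_eq_add_map_inv_mul g h, add_sub_cancel_left,
    LinearIsometryEquiv.norm_map]

theorem norm_map_inv (hb : IsCocycle π b) (g : G) : ‖b g⁻¹‖ = ‖b g‖ := by
  simpa [hb.map_one] using hb.norm_map_inv_mul g 1

theorem norm_map_div_le (hb : IsCocycle π b) (g h : G) : ‖b (g / h)‖ ≤ ‖b g‖ + ‖b h‖ := by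
  calc ‖b (g / h)‖ = ‖b g + π g (b h⁻¹)‖ := by rw [div_eq_mul_inv, hb]
    _ ≤ ‖b g‖ + ‖π g (b h⁻¹)‖ := norm_add_le _ _
    _ = ‖b g‖ + ‖b h‖ := by rw [(π g).norm_map, hb.norm_map_inv]

theorem continuous_of_tendsto_nhds_one [TopologicalSpace G] [ContinuousMul G] (hb : IsCocycle π b)
    (h1 : Tendsto b (𝓝 1) (𝓝 0)) : Continuous b := by
  refine continuous_iff_continuousAt.2 fun g => ?_
  have hg : Tendsto (g⁻¹ * ·) (𝓝 g) (𝓝 1) := by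
    simpa using (continuous_const_mul g⁻¹).tendsto g
  have := ((π g).continuous.tendsto' 0 0 (map_zero _)).comp (h1.comp hg) |>.const_add (b g)
  rw [add_zero] at this
  exact this.congr fun h => (hb.map_eq_add_map_inv_mul g h).symm

theorem exists_iUnion_smul_preimage_ball_eq_univ [TopologicalSpace.SeparableSpace E]
    (hb : IsCocycle π b) {r : ℝ} (hr : 0 < r) :
    ∃ t : Set G, t.Countable ∧ ⋃ g ∈ t, g • b ⁻¹' Metric.ball 0 r = univ := by
  obtain ⟨t, htc, hdense⟩ := exists_countable_range_subset_closure_image b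
  refine ⟨t, htc, eq_univ_of_forall fun h => ?_⟩
  obtain ⟨_, ⟨g, hgt, rfl⟩, hgh⟩ := Metric.mem_closure_iff.1 (hdense (mem_range_self h)) r hr
  refine mem_iUnion₂.2 ⟨g, hgt, g⁻¹ * h, ?_, mul_inv_cancel_left g h⟩
  rwa [mem_preimage, mem_ball_zero_iff, hb.norm_map_inv_mul]

theorem tendsto_nhds_one_of_measurable [TopologicalSpace G] [IsTopologicalGroup G]
    [LocallyCompactSpace G] [MeasurableSpace G] [BorelSpace G] [MeasurableSpace E]
    [OpensMeasurableSpace E] [TopologicalSpace.SeparableSpace E] (hb : IsCocycle π b) (hmeas : Measurable b) :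
    Tendsto b (𝓝 1) (𝓝 0) := by
  refine NormedAddGroup.tendsto_nhds_zero.2 fun ε hε => ?_
  obtain ⟨t, htc, hcover⟩ := hb.exists_iUnion_smul_preimage_ball_eq_univ (half_pos hε)
  filter_upwards [div_mem_nhds_one_of_iUnion_smul_eq_univ (hmeas measurableSet_ball) htc hcover]
  rintro _ ⟨g, hg, h, hh, rfl⟩
  rw [mem_preimage, mem_ball_zero_iff] at hg hh
  linarith [hb.norm_map_div_le g h]

end IsCocycle

theorem continuous_of_measurable_cocycle_general
    {G : Type*} [Group G] [TopologicalSpace G] [IsTopologicalGroup G]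
    [LocallyCompactSpace G]
    [MeasurableSpace G] [BorelSpace G]
    {E : Type*} [NormedAddCommGroup E] [NormedSpace ℝ E]
    [TopologicalSpace.SeparableSpace E] [MeasurableSpace E] [BorelSpace E]
    (π : G →* (E ≃ₗᵢ[ℝ] E))
    (b : G → E) (hb : Measurable b)
    (hcoc : ∀ g h : G, b (g * h) = b g + π g (b h)) :
    Continuous b :=
  have hb' : IsCocycle π b := hcoc
  hb'.continuous_of_tendsto_nhds_one (hb'.tendsto_nhds_one_of_measurable hb)

theorem continuous_of_measurable_cocycle
    {G : Type*} [Group G] [TopologicalSpace G] [IsTopologicalGroup G]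
    [LocallyCompactSpace G] [SecondCountableTopology G]
    [MeasurableSpace G] [BorelSpace G]
    {E : Type*} [NormedAddCommGroup E] [NormedSpace ℝ E] [CompleteSpace E]
    [TopologicalSpace.SeparableSpace E] [MeasurableSpace E] [BorelSpace E]
    (π : G →* (E ≃ₗᵢ[ℝ] E)) (hπ : ∀ x : E, Continuous fun g : G => π g x)
    (b : G → E) (hb : Measurable b)
    (hcoc : ∀ g h : G, b (g * h) = b g + π g (b h)) :
    Continuous b :=
  continuous_of_measurable_cocycle_general π b hb hcoc
end

section
/- Let G be a locally compact second countable, compactly generated group with compact symmetric generating set S, let μ be a cohomologically adapted probability measure on G, let 1 ≤ p < ∞, let E be a separable real Banach space and π : G → O(E) a strongly continuous isometric linear representation. Then there exists C ≥ 1 such that for every continuous 1-cocycle b ∈ Z¹(G, π): C⁻¹ · sup_{g ∈ S} ‖b(g)‖ ≤ (∫_G ‖b(g)‖^p dμ(g))^{1/p} ≤ C · sup_{g ∈ S} ‖b(g)‖. -/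
open Pointwise
open scoped ENNReal

noncomputable section

/-- The word length of `g` with respect to a generating set `S`:
`|g|_S = min {n : g ∈ Sⁿ}`. -/
def wordLength {G : Type*} [Monoid G] (S : Set G) (g : G) : ℕ :=
  sInf {n : ℕ | g ∈ S ^ n}

/-- The `n`-fold convolution power `μ^{*n}` of a measure on a group
(with `μ^{*0} = δ₁`). -/
def convPow {G : Type*} [Monoid G] [MeasurableSpace G]
    (μ : MeasureTheory.Measure G) : ℕ → MeasureTheory.Measure G
  | 0 => MeasureTheory.Measure.dirac 1
  | n + 1 => MeasureTheory.Measure.map (fun q : G × G => q.1 * q.2)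
      ((convPow μ n).prod μ)

/-- A Borel probability measure `μ` on a locally compact compactly generated group `G`
with compact symmetric generating set `S` is cohomologically adapted if it is symmetric,
absolutely continuous with respect to the Haar measure, its support contains `S`, its
density is essentially bounded below by a positive constant on `S`, and it has finite
`p`-moments for all `1 ≤ p < ∞`. -/
structure CohomologicallyAdapted {G : Type*} [Group G] [TopologicalSpace G]
    [IsTopologicalGroup G] [LocallyCompactSpace G] [MeasurableSpace G] [BorelSpace G]
    (S : Set G) (μ : MeasureTheory.Measure G) : Prop where
  isProb : MeasureTheory.IsProbabilityMeasure μ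
  symmetric : MeasureTheory.Measure.map (fun g => g⁻¹) μ = μ
  absCont : μ.AbsolutelyContinuous MeasureTheory.Measure.haar
  suppContains : ∀ g ∈ S, ∀ U : Set G, IsOpen U → g ∈ U → 0 < μ U
  densityBounded : ∃ ε : ℝ≥0∞, 0 < ε ∧
    ∀ᵐ x ∂((MeasureTheory.Measure.haar : MeasureTheory.Measure G).restrict S),
      ε ≤ μ.rnDeriv MeasureTheory.Measure.haar x
  finiteMoments : ∀ p : ℝ, 1 ≤ p →
    MeasureTheory.Integrable (fun g => (wordLength S g : ℝ) ^ p) μ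

/-!
The upper bound is elementary: a cocycle is subadditive in norm, so `‖b g‖ ≤ |g|_S · sup_S ‖b‖`,
and the word length has finite `p`-th moment.

For the lower bound, `F = ‖b‖ₑ ^ p` satisfies `F g⁻¹ = F g` and `F (g h) ≤ κ (F g + F h)` with
`κ = 2 ^ (p - 1)`, so its integrals against `μ ∗ μ` and `μ ∗ μ ∗ μ` are controlled by `∫ F dμ`.
Let `m` be Haar measure. As `μ ≪ m`, `μ ≥ η • m|K` for a compact `K` with `m K > 0`, and
`m|K ∗ m|K` has the lower semicontinuous, nonzero density `u ↦ m (K ∩ u K⁻¹)`; hence `μ ∗ μ`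
dominates a multiple of `m` on a compact set `W` with nonempty interior. Convolving once more
with `μ` transports this to a neighbourhood of `s w` for every `s ∈ supp μ ⊇ S`, so by
compactness `m` restricted to `S W ∪ W` is bounded by a multiple of `μ ∗ μ + μ ∗ μ ∗ μ`.
Averaging `F g ≤ κ (F (g h) + F h⁻¹)` over `h` in the interior of `W` then bounds `F` on `S`
by a multiple of `∫ F dμ`.
-/

open MeasureTheory Measure Filter Set Topology
open scoped NNReal

theorem lintegral_mconv_le_of_le_mul_add {M : Type*} [Monoid M] [MeasurableSpace M]
    [MeasurableMul₂ M] {F : M → ℝ≥0∞} (hF : Measurable F) {κ : ℝ≥0∞}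
    (hFκ : ∀ g h, F (g * h) ≤ κ * (F g + F h)) (μ ν : Measure M) [IsProbabilityMeasure μ]
    [IsProbabilityMeasure ν] :
    ∫⁻ x, F x ∂(μ ∗ₘ ν) ≤ κ * (∫⁻ x, F x ∂μ + ∫⁻ x, F x ∂ν) := by
  have hconst_add : ∀ (ρ : Measure M) [IsProbabilityMeasure ρ] (a : ℝ≥0∞),
      ∫⁻ x, κ * (a + F x) ∂ρ = κ * (a + ∫⁻ x, F x ∂ρ) := fun ρ _ a => by
    rw [lintegral_const_mul _ (by fun_prop), lintegral_add_left measurable_const,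
      lintegral_const, measure_univ, mul_one]
  rw [lintegral_mconv hF]
  calc ∫⁻ x, ∫⁻ y, F (x * y) ∂ν ∂μ ≤ ∫⁻ x, ∫⁻ y, κ * (F x + F y) ∂ν ∂μ := by
        gcongr with x y; exact hFκ x y
    _ = ∫⁻ x, κ * (∫⁻ y, F y ∂ν + F x) ∂μ := by simp only [hconst_add, add_comm]
    _ = κ * (∫⁻ x, F x ∂μ + ∫⁻ x, F x ∂ν) := by rw [hconst_add, add_comm]

theorem mconv_apply_eq_lintegral {M : Type*} [Monoid M] [MeasurableSpace M] [MeasurableMul₂ M]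
    (μ ν : Measure M) [SFinite ν] {A : Set M} (hA : MeasurableSet A) :
    (μ ∗ₘ ν) A = ∫⁻ g, ν ((g * ·) ⁻¹' A) ∂μ := by
  rw [mconv, map_apply measurable_mul hA, prod_apply (measurable_mul hA)]
  rfl

section LocalDomination

variable {α : Type*} [TopologicalSpace α] [MeasurableSpace α]

def DominatesNear (m ν : Measure α) (z : α) : Prop :=
  ∃ U ∈ 𝓝 z, ∃ c : ℝ≥0, c ≠ 0 ∧ c • m.restrict U ≤ ν

theorem DominatesNear.mono {m ν ν' : Measure α} {z : α} (h : DominatesNear m ν z)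
    (hν : ν ≤ ν') : DominatesNear m ν' z :=
  let ⟨U, hU, c, hc, hle⟩ := h
  ⟨U, hU, c, hc, hle.trans hν⟩

theorem DominatesNear.smul {m ν : Measure α} {z : α} (h : DominatesNear m ν z) {a : ℝ≥0}
    (ha : a ≠ 0) : DominatesNear m (a • ν) z := by
  obtain ⟨U, hU, c, hc, hle⟩ := h
  refine ⟨U, hU, a * c, mul_ne_zero ha hc, ?_⟩
  rw [mul_smul]
  exact smul_le_smul_left a hle

theorem exists_restrict_le_smul_of_forall_dominatesNear {m ν : Measure α} {K : Set α}
    (hK : IsCompact K) (h : ∀ z ∈ K, DominatesNear m ν z) :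
    ∃ C : ℝ≥0, m.restrict K ≤ C • ν := by
  choose U hU c hc hle using h
  obtain ⟨t, hKt⟩ := hK.elim_nhds_subcover' U hU
  refine ⟨∑ z ∈ t, (c z z.2)⁻¹, ?_⟩
  have hcover : m.restrict K ≤ ∑ z ∈ t, m.restrict (U z z.2) := by
    refine Measure.le_iff.2 fun A hA => ?_
    rw [restrict_apply hA, Measure.finsetSum_apply]
    simp only [restrict_apply hA]
    calc m (A ∩ K) ≤ m (⋃ z ∈ t, A ∩ U z z.2) := by
          rw [← inter_iUnion₂]; exact measure_mono (inter_subset_inter_right A hKt)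
      _ ≤ ∑ z ∈ t, m (A ∩ U z z.2) := measure_biUnion_finset_le t _
  calc m.restrict K ≤ ∑ z ∈ t, m.restrict (U z z.2) := hcover
    _ ≤ ∑ z ∈ t, (c z z.2)⁻¹ • ν := by
        gcongr with z
        rw [← inv_smul_smul₀ (hc z z.2) (m.restrict (U z z.2))]
        exact smul_le_smul_left _ (hle z z.2)
    _ = (∑ z ∈ t, (c z z.2)⁻¹) • ν := (Finset.sum_smul ..).symm

end LocalDomination

theorem smul_restrict_le_withDensity {α : Type*} [MeasurableSpace α] {m : Measure α}
    {U : Set α} (hU : MeasurableSet U) {c : ℝ≥0} {f : α → ℝ≥0∞} (hf : ∀ x ∈ U, c ≤ f x) :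
    c • m.restrict U ≤ m.withDensity f := by
  rw [ENNReal.smul_def, ← withDensity_const, ← withDensity_indicator hU]
  refine withDensity_mono (Eventually.of_forall fun x => ?_)
  by_cases hx : x ∈ U
  · simpa [hx] using hf x hx
  · simp [hx]

theorem exists_isCompact_isClosed_smul_restrict_le {α : Type*} [TopologicalSpace α]
    [MeasurableSpace α] [BorelSpace α] [R1Space α] {m μ : Measure α} [SigmaFinite m]
    [InnerRegularCompactLTTop m] [IsFiniteMeasure μ] (hμ : μ ≪ m) (hμ0 : μ ≠ 0) :
    ∃ K, IsCompact K ∧ IsClosed K ∧ m K ≠ 0 ∧ ∃ η : ℝ≥0, η ≠ 0 ∧ η • m.restrict K ≤ μ := by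
  set f := μ.rnDeriv m
  have hf : Measurable f := measurable_rnDeriv μ m
  have hμf : m.withDensity f = μ := withDensity_rnDeriv_eq μ m hμ
  have hlevel : ∃ n : ℕ, m {x | ((n : ℝ≥0∞) + 1)⁻¹ ≤ f x} ≠ 0 := by
    by_contra! h
    have hcover : {x | f x ≠ 0} ⊆ ⋃ n : ℕ, {x | ((n : ℝ≥0∞) + 1)⁻¹ ≤ f x} := fun x hx => by
      obtain ⟨n, hn⟩ := ENNReal.exists_inv_nat_lt hx
      exact mem_iUnion.2 ⟨n, (ENNReal.inv_le_inv.2 le_self_add).trans hn.le⟩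
    have hf0 : f =ᵐ[m] 0 := measure_mono_null hcover (measure_iUnion_null h)
    exact hμ0 (by rw [← hμf, withDensity_congr_ae hf0, withDensity_zero])
  obtain ⟨n, hn⟩ := hlevel
  set η : ℝ≥0 := ((n : ℝ≥0) + 1)⁻¹
  have hη : η ≠ 0 := by simp [η]
  set E := {x | (η : ℝ≥0∞) ≤ f x}
  have hE : MeasurableSet E := measurableSet_le measurable_const hf
  have hηE : η • m.restrict E ≤ μ := hμf ▸ smul_restrict_le_withDensity hE fun _ hx => hx
  have hEfin : m E ≠ ∞ := by
    have h := hηE E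
    rw [coe_nnreal_smul_apply, restrict_apply_self] at h
    exact fun htop => (h.trans_lt (measure_lt_top μ E)).ne
      (ENNReal.mul_eq_top.2 (Or.inl ⟨by simpa using hη, htop⟩))
  obtain ⟨K, hKE, hK, hKpos⟩ :=
    hE.exists_lt_isCompact_of_ne_top hEfin (pos_iff_ne_zero.2 (by simpa [η, E] using hn))
  refine ⟨closure K, hK.closure, isClosed_closure, by rw [hK.measure_closure]; exact hKpos.ne',
    η, hη, ?_⟩
  exact (smul_le_smul_left η
    (restrict_mono (hK.closure_subset_measurableSet hE hKE) le_rfl)).trans hηE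

section HaarMeasure

variable {G : Type*} [Group G] [TopologicalSpace G] [IsTopologicalGroup G]
  [MeasurableSpace G] [BorelSpace G]

theorem lowerSemicontinuous_measure_inter_smul [LocallyCompactSpace G] (m : Measure G)
    [m.IsMulLeftInvariant] [IsFiniteMeasureOnCompacts m] [InnerRegularCompactLTTop m]
    (A : Set G) {B : Set G} (hB : IsCompact B) (hB' : IsClosed B) :
    LowerSemicontinuous fun u : G => m (A ∩ u • B) := by
  intro u₀ y hy
  have hfin : ∀ u : G, m (A ∩ u • B) ≠ ∞ := fun u =>
    ne_top_of_le_ne_top (hB.smul u).measure_lt_top.ne (measure_mono inter_subset_right)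
  have hlim : Tendsto (fun u : G => u⁻¹ * u₀) (𝓝 u₀) (𝓝 1) := by
    have hcont : Continuous fun u : G => u⁻¹ * u₀ := by fun_prop
    exact hcont.tendsto' u₀ 1 (inv_mul_cancel u₀)
  filter_upwards [hlim.eventually (eventually_nhds_one_measure_smul_sdiff_lt (μ := m) hB hB'
    (tsub_pos_of_lt hy).ne')] with u hu
  have hsub : A ∩ u₀ • B ⊆ (A ∩ u • B) ∪ (u₀ • B \ u • B) := fun x hx => by
    by_cases hxu : x ∈ u • B
    · exact Or.inl ⟨hx.1, hxu⟩
    · exact Or.inr ⟨hx.2, hxu⟩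
  have hdiff : m (u₀ • B \ u • B) = m ((u⁻¹ * u₀) • B \ B) := by
    have htrans : u⁻¹ • (u₀ • B \ u • B) = (u⁻¹ * u₀) • B \ B := by
      rw [smul_set_sdiff, smul_smul, smul_smul, inv_mul_cancel, one_smul]
    rw [← htrans, measure_smul]
  have key : m (A ∩ u₀ • B) < m (A ∩ u • B) + (m (A ∩ u₀ • B) - y) :=
    calc m (A ∩ u₀ • B) ≤ m (A ∩ u • B) + m (u₀ • B \ u • B) :=
          (measure_mono hsub).trans (measure_union_le _ _)
      _ < m (A ∩ u • B) + (m (A ∩ u₀ • B) - y) := by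
          rw [hdiff]; exact ENNReal.add_lt_add_left (hfin u) hu
  calc y = m (A ∩ u₀ • B) - (m (A ∩ u₀ • B) - y) :=
        (ENNReal.sub_sub_cancel (hfin u₀) hy.le).symm
    _ < m (A ∩ u • B) :=
        (ENNReal.sub_lt_iff_lt_right (ENNReal.sub_ne_top (hfin u₀)) tsub_le_self).2 key

theorem mlconvolution_indicator_one (m : Measure G) {K : Set G} (hK : MeasurableSet K) (u : G) :
    (K.indicator 1 ⋆ₘₗ[m] K.indicator 1) u = m (K ∩ u • K⁻¹) := by
  rw [mlconvolution_def, ← lintegral_indicator_one (hK.inter (hK.inv.const_smul u)),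
    inter_indicator_one]
  congr 1
  funext y
  have hmem : y ∈ u • K⁻¹ ↔ y⁻¹ * u ∈ K := by
    rw [mem_smul_set_iff_inv_smul_mem, Set.mem_inv, smul_eq_mul, mul_inv_rev, inv_inv]
  congr 1
  by_cases hy : y⁻¹ * u ∈ K
  · rw [indicator_of_mem hy, indicator_of_mem (hmem.2 hy), Pi.one_apply, Pi.one_apply]
  · rw [indicator_of_notMem hy, indicator_of_notMem (mt hmem.1 hy)]

theorem exists_dominatesNear_mconv_restrict_self [LocallyCompactSpace G] [MeasurableMul₂ G]
    (m : Measure G) [m.IsMulLeftInvariant] [IsFiniteMeasureOnCompacts m]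
    [InnerRegularCompactLTTop m] [SFinite m] {K : Set G} (hK : IsCompact K)
    (hK' : IsClosed K) (hK0 : m K ≠ 0) :
    ∃ z, DominatesNear m (m.restrict K ∗ₘ m.restrict K) z := by
  set ψ : G → ℝ≥0∞ := fun u => m (K ∩ u • K⁻¹)
  have hconv : m.restrict K ∗ₘ m.restrict K = m.withDensity ψ := by
    rw [← withDensity_indicator_one hK'.measurableSet,
      mconv_withDensity_eq_mlconvolution (measurable_one.indicator hK'.measurableSet)
        (measurable_one.indicator hK'.measurableSet)]
    exact congrArg _ (funext (mlconvolution_indicator_one m hK'.measurableSet))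
  obtain ⟨u₀, hu₀⟩ : ∃ u₀, ψ u₀ ≠ 0 := by
    by_contra! h
    have hmass : (m.restrict K ∗ₘ m.restrict K) univ = m K * m K := by
      rw [mconv, map_apply measurable_mul MeasurableSet.univ, preimage_univ, ← univ_prod_univ,
        prod_prod, restrict_apply_univ]
    rw [hconv, show ψ = 0 from funext h, withDensity_zero] at hmass
    exact mul_ne_zero hK0 hK0 (by simpa using hmass.symm)
  have hfin : ψ u₀ ≠ ∞ := ne_top_of_le_ne_top hK.measure_lt_top.ne (measure_mono inter_subset_left)
  have hU : {u | ψ u₀ / 2 < ψ u} ∈ 𝓝 u₀ :=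
    lowerSemicontinuous_measure_inter_smul m K hK.inv hK'.inv u₀ _
      (ENNReal.half_lt_self hu₀ hfin)
  refine ⟨u₀, interior {u | ψ u₀ / 2 < ψ u}, interior_mem_nhds.2 hU, (ψ u₀ / 2).toNNReal,
    by simp [ENNReal.toNNReal_eq_zero_iff, hu₀, hfin], ?_⟩
  rw [hconv]
  refine smul_restrict_le_withDensity isOpen_interior.measurableSet fun u hu => ?_
  exact ENNReal.coe_toNNReal_le_self.trans (interior_subset hu).le

theorem DominatesNear.mconv_left [MeasurableMul₂ G] {m : Measure G} [m.IsMulLeftInvariant]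
    {μ ρ : Measure G} [IsFiniteMeasure μ] [SFinite ρ] {s y : G} (hρ : DominatesNear m ρ y)
    (hs : s ∈ μ.support) : DominatesNear m (μ ∗ₘ ρ) (s * y) := by
  obtain ⟨U, hU, c, hc, hle⟩ := hρ
  have hmem : (fun q : G × G => q.1⁻¹ * q.2) ⁻¹' U ∈ 𝓝 (s, s * y) := by
    have hcont : Continuous fun q : G × G => q.1⁻¹ * q.2 := by fun_prop
    exact hcont.continuousAt.preimage_mem_nhds (by simpa using hU)
  obtain ⟨O, V, hOo, hsO, hVo, hsyV, hOV⟩ := mem_nhds_prod_iff'.1 hmem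
  have hμO : 0 < μ O := (mem_support_iff_forall s).1 hs O (hOo.mem_nhds hsO)
  refine ⟨V, hVo.mem_nhds hsyV, c * (μ O).toNNReal,
    mul_ne_zero hc (ENNReal.toNNReal_pos hμO.ne' (measure_ne_top μ O)).ne', ?_⟩
  refine Measure.le_iff.2 fun A hA => ?_
  have htrans : ∀ g ∈ O, (g * ·) ⁻¹' (A ∩ V) ⊆ U := fun g hg x hx => by
    simpa using hOV (show (g, g * x) ∈ O ×ˢ V from ⟨hg, hx.2⟩)
  have hstep : ∀ g ∈ O, (c : ℝ≥0∞) * m (A ∩ V) ≤ ρ ((g * ·) ⁻¹' A) := fun g hg =>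
    calc (c : ℝ≥0∞) * m (A ∩ V) = (c • m.restrict U) ((g * ·) ⁻¹' (A ∩ V)) := by
          rw [coe_nnreal_smul_apply,
            restrict_apply ((hA.inter hVo.measurableSet).preimage (measurable_const_mul g)),
            inter_eq_left.2 (htrans g hg), measure_preimage_mul]
      _ ≤ ρ ((g * ·) ⁻¹' (A ∩ V)) := Measure.le_iff'.1 hle _
      _ ≤ ρ ((g * ·) ⁻¹' A) := measure_mono (preimage_mono inter_subset_left)
  calc ((c * (μ O).toNNReal) • m.restrict V) A = ∫⁻ g in O, (c : ℝ≥0∞) * m (A ∩ V) ∂μ := by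
        rw [setLIntegral_const, coe_nnreal_smul_apply, restrict_apply hA, ENNReal.coe_mul,
          ENNReal.coe_toNNReal (measure_ne_top μ O)]
        ring
    _ ≤ ∫⁻ g in O, ρ ((g * ·) ⁻¹' A) ∂μ := setLIntegral_mono' hOo.measurableSet hstep
    _ ≤ ∫⁻ g, ρ ((g * ·) ⁻¹' A) ∂μ := setLIntegral_le_lintegral _ _
    _ = (μ ∗ₘ ρ) A := (mconv_apply_eq_lintegral μ ρ hA).symm

theorem exists_dominatesNear_mconv_self [LocallyCompactSpace G] [MeasurableMul₂ G]
    (m : Measure G) [m.IsMulLeftInvariant] [IsFiniteMeasureOnCompacts m]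
    [InnerRegularCompactLTTop m] [SigmaFinite m] {μ : Measure G} [IsFiniteMeasure μ]
    (hμ : μ ≪ m) (hμ0 : μ ≠ 0) : ∃ z, DominatesNear m (μ ∗ₘ μ) z := by
  obtain ⟨K, hK, hK', hK0, η, hη, hle⟩ := exists_isCompact_isClosed_smul_restrict_le hμ hμ0
  obtain ⟨z, hz⟩ := exists_dominatesNear_mconv_restrict_self m hK hK' hK0
  refine ⟨z, (hz.smul (mul_ne_zero hη hη)).mono ?_⟩
  calc (η * η) • (m.restrict K ∗ₘ m.restrict K)
      = (η • m.restrict K) ∗ₘ (η • m.restrict K) := by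
        simp only [ENNReal.smul_def, mconv_smul_left, mconv_smul_right, smul_smul, ENNReal.coe_mul]
    _ ≤ μ ∗ₘ μ := map_mono (prod_mono hle hle) measurable_mul

theorem exists_isCompact_forall_dominatesNear [LocallyCompactSpace G] [MeasurableMul₂ G]
    (m : Measure G) [m.IsMulLeftInvariant] [IsFiniteMeasureOnCompacts m]
    [InnerRegularCompactLTTop m] [SigmaFinite m] {μ : Measure G} [IsProbabilityMeasure μ]
    (hμ : μ ≪ m) {S : Set G} (hSμ : S ⊆ μ.support) :
    ∃ W, IsCompact W ∧ (interior W).Nonempty ∧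
      ∀ z ∈ S * W ∪ W, DominatesNear m (μ ∗ₘ μ + μ ∗ₘ (μ ∗ₘ μ)) z := by
  obtain ⟨z₀, U, hU, c, hc, hle⟩ :=
    exists_dominatesNear_mconv_self m hμ (IsProbabilityMeasure.ne_zero μ)
  obtain ⟨W, hW, hz₀W, hWU⟩ :=
    exists_compact_subset isOpen_interior (mem_interior_iff_mem_nhds.2 hU)
  have hWdom : ∀ w ∈ W, DominatesNear m (μ ∗ₘ μ) w := fun w hw =>
    ⟨U, mem_interior_iff_mem_nhds.1 (hWU hw), c, hc, hle⟩
  refine ⟨W, hW, ⟨z₀, hz₀W⟩, ?_⟩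
  rintro z (⟨s, hs, w, hw, rfl⟩ | hz)
  · exact ((hWdom w hw).mconv_left (hSμ hs)).mono (Measure.le_add_left le_rfl)
  · exact (hWdom z hz).mono (Measure.le_add_right le_rfl)

theorem mul_measure_le_lintegral_of_le_mul_add [MeasurableMul₂ G] (m : Measure G)
    [m.IsMulLeftInvariant] {F : G → ℝ≥0∞} (hF : Measurable F) (hFinv : ∀ g, F g⁻¹ = F g)
    {κ : ℝ≥0∞} (hFκ : ∀ g h, F (g * h) ≤ κ * (F g + F h)) {g : G} {V K : Set G}
    (hVK : V ⊆ K) (hgVK : V ⊆ (g * ·) ⁻¹' K) :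
    F g * m V ≤ 2 * κ * ∫⁻ x in K, F x ∂m := by
  have hpt : ∀ h, F g ≤ κ * (F (g * h) + F h) := fun h => by
    simpa [hFinv] using hFκ (g * h) h⁻¹
  have htrans : ∫⁻ h in V, F (g * h) ∂m ≤ ∫⁻ x in K, F x ∂m :=
    calc ∫⁻ h in V, F (g * h) ∂m ≤ ∫⁻ h in (g * ·) ⁻¹' K, F (g * h) ∂m :=
          lintegral_mono_set hgVK
      _ = ∫⁻ x in K, F x ∂m :=
          (measurePreserving_mul_left m g).setLIntegral_comp_preimage_emb
            (measurableEmbedding_mulLeft g) F K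
  calc F g * m V = ∫⁻ _ in V, F g ∂m := (setLIntegral_const V (F g)).symm
    _ ≤ ∫⁻ h in V, κ * (F (g * h) + F h) ∂m := lintegral_mono fun h => hpt h
    _ = κ * (∫⁻ h in V, F (g * h) ∂m + ∫⁻ h in V, F h ∂m) := by
        rw [lintegral_const_mul _ (by fun_prop), lintegral_add_left (by fun_prop)]
    _ ≤ κ * (∫⁻ x in K, F x ∂m + ∫⁻ x in K, F x ∂m) :=
        mul_le_mul_right (add_le_add htrans (lintegral_mono_set hVK)) κ
    _ = 2 * κ * ∫⁻ x in K, F x ∂m := by ring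

theorem exists_forall_le_mul_lintegral [LocallyCompactSpace G] [MeasurableMul₂ G]
    (m : Measure G) [m.IsHaarMeasure] [InnerRegularCompactLTTop m] [SigmaFinite m]
    {μ : Measure G} [IsProbabilityMeasure μ] (hμ : μ ≪ m) {S : Set G} (hS : IsCompact S)
    (hSμ : S ⊆ μ.support) {κ : ℝ≥0∞} (hκ : κ ≠ ∞) :
    ∃ D : ℝ≥0, ∀ F : G → ℝ≥0∞, Measurable F → (∀ g, F g⁻¹ = F g) →
      (∀ g h, F (g * h) ≤ κ * (F g + F h)) → ∀ g ∈ S, F g ≤ D * ∫⁻ x, F x ∂μ := by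
  obtain ⟨W, hW, hWne, hdom⟩ := exists_isCompact_forall_dominatesNear m hμ hSμ
  obtain ⟨C, hC⟩ := exists_restrict_le_smul_of_forall_dominatesNear ((hS.mul hW).union hW) hdom
  have hV0 : m (interior W) ≠ 0 := (isOpen_interior.measure_pos m hWne).ne'
  have hVfin : m (interior W) ≠ ∞ :=
    ne_top_of_le_ne_top hW.measure_lt_top.ne (measure_mono interior_subset)
  set D : ℝ≥0∞ := (m (interior W))⁻¹ * (2 * κ * C * (2 * κ + κ * (1 + 2 * κ)))
  refine ⟨D.toNNReal, fun F hF hFinv hFκ g hg => ?_⟩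
  set Λ := ∫⁻ x, F x ∂μ
  have hμμ : ∫⁻ x, F x ∂(μ ∗ₘ μ) ≤ 2 * κ * Λ :=
    (lintegral_mconv_le_of_le_mul_add hF hFκ μ μ).trans_eq (by ring)
  have hν : ∫⁻ x, F x ∂(μ ∗ₘ μ + μ ∗ₘ (μ ∗ₘ μ)) ≤ (2 * κ + κ * (1 + 2 * κ)) * Λ := by
    rw [lintegral_add_measure]
    calc ∫⁻ x, F x ∂(μ ∗ₘ μ) + ∫⁻ x, F x ∂(μ ∗ₘ (μ ∗ₘ μ))
        ≤ 2 * κ * Λ + κ * (Λ + 2 * κ * Λ) :=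
          add_le_add hμμ ((lintegral_mconv_le_of_le_mul_add hF hFκ μ (μ ∗ₘ μ)).trans
            (mul_le_mul_right (add_le_add_right hμμ Λ) κ))
      _ = (2 * κ + κ * (1 + 2 * κ)) * Λ := by ring
  have hK : F g * m (interior W) ≤ 2 * κ * ∫⁻ x in S * W ∪ W, F x ∂m :=
    mul_measure_le_lintegral_of_le_mul_add m hF hFinv hFκ
      (interior_subset.trans subset_union_right)
      (fun h hh => Or.inl (mul_mem_mul hg (interior_subset hh)))
  calc F g = (m (interior W))⁻¹ * (F g * m (interior W)) := by
        rw [mul_comm (F g), ← mul_assoc, ENNReal.inv_mul_cancel hV0 hVfin, one_mul]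
    _ ≤ (m (interior W))⁻¹ * (2 * κ * (C * ∫⁻ x, F x ∂(μ ∗ₘ μ + μ ∗ₘ (μ ∗ₘ μ)))) := by
        refine mul_le_mul_right (hK.trans (mul_le_mul_right ?_ _)) _
        exact (lintegral_mono' hC le_rfl).trans_eq (lintegral_smul_measure _ _)
    _ ≤ (m (interior W))⁻¹ * (2 * κ * (C * ((2 * κ + κ * (1 + 2 * κ)) * Λ))) := by gcongr
    _ = D.toNNReal * Λ := by
        rw [ENNReal.coe_toNNReal (by finiteness)]
        ring

end HaarMeasure

section Cocycle

variable {G E : Type*} [Group G] [NormedAddCommGroup E] [Module ℝ E]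

def IsOneCocycle (π : G →* (E ≃ₗᵢ[ℝ] E)) (b : G → E) : Prop :=
  ∀ g h, b (g * h) = b g + π g (b h)

namespace IsOneCocycle

variable {π : G →* (E ≃ₗᵢ[ℝ] E)} {b : G → E}

theorem map_one (hb : IsOneCocycle π b) : b 1 = 0 := by
  simpa using hb 1 1

theorem enorm_mul_le (hb : IsOneCocycle π b) (g h : G) : ‖b (g * h)‖ₑ ≤ ‖b g‖ₑ + ‖b h‖ₑ := by
  rw [hb g h, ← (π g).enorm_map (b h)]
  exact enorm_add_le (b g) (π g (b h))

theorem norm_mul_le (hb : IsOneCocycle π b) (g h : G) : ‖b (g * h)‖ ≤ ‖b g‖ + ‖b h‖ := by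
  rw [hb g h, ← (π g).norm_map (b h)]
  exact norm_add_le (b g) (π g (b h))

theorem enorm_inv (hb : IsOneCocycle π b) (g : G) : ‖b g⁻¹‖ₑ = ‖b g‖ₑ := by
  have h := hb g g⁻¹
  rw [mul_inv_cancel, hb.map_one, eq_comm, add_eq_zero_iff_eq_neg] at h
  rw [← (π g).enorm_map, h, enorm_neg]

theorem norm_le_mul_of_mem_pow (hb : IsOneCocycle π b) {S : Set G} {M : ℝ}
    (hM : ∀ s ∈ S, ‖b s‖ ≤ M) {n : ℕ} {g : G} (hg : g ∈ S ^ n) : ‖b g‖ ≤ n * M := by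
  induction n generalizing g with
  | zero =>
    rw [pow_zero, Set.mem_one] at hg
    simp [hg, hb.map_one]
  | succ n ih =>
    obtain ⟨x, hx, s, hs, rfl⟩ := Set.mem_mul.1 (by rwa [pow_succ] at hg)
    calc ‖b (x * s)‖ ≤ ‖b x‖ + ‖b s‖ := hb.norm_mul_le x s
      _ ≤ n * M + M := add_le_add (ih hx) (hM s hs)
      _ = (n + 1 : ℕ) * M := by push_cast; ring

theorem norm_le_wordLength_mul (hb : IsOneCocycle π b) {S : Set G}
    (hS : ∀ g : G, ∃ n : ℕ, g ∈ S ^ n) {M : ℝ} (hM : ∀ s ∈ S, ‖b s‖ ≤ M) (g : G) :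
    ‖b g‖ ≤ wordLength S g * M :=
  hb.norm_le_mul_of_mem_pow hM (Nat.sInf_mem (hS g))

theorem enorm_rpow_mul_le (hb : IsOneCocycle π b) {p : ℝ} (hp : 1 ≤ p) (g h : G) :
    ‖b (g * h)‖ₑ ^ p ≤ 2 ^ (p - 1) * (‖b g‖ₑ ^ p + ‖b h‖ₑ ^ p) :=
  (ENNReal.rpow_le_rpow (hb.enorm_mul_le g h) (by linarith)).trans
    (ENNReal.rpow_add_le_mul_rpow_add_rpow _ _ hp)

end IsOneCocycle

end Cocycle

section NormRpow

variable {α E : Type*} [MeasurableSpace α] [NormedAddCommGroup E] {μ : Measure α} {f : α → E}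
  {p : ℝ}

theorem integrable_norm_rpow_and_integral_le_of_norm_le_mul (hf : AEStronglyMeasurable f μ)
    (hp : 0 < p) {w : α → ℝ} (hw0 : ∀ x, 0 ≤ w x) (hw : Integrable (fun x => w x ^ p) μ)
    {M : ℝ} (hM : 0 ≤ M) (hfw : ∀ x, ‖f x‖ ≤ w x * M) :
    Integrable (fun x => ‖f x‖ ^ p) μ ∧
      (∫ x, ‖f x‖ ^ p ∂μ) ^ (1 / p) ≤ (∫ x, w x ^ p ∂μ) ^ (1 / p) * M := by
  have hpt : ∀ x, ‖f x‖ ^ p ≤ M ^ p * w x ^ p := fun x => by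
    rw [← Real.mul_rpow hM (hw0 x), mul_comm M]
    exact Real.rpow_le_rpow (norm_nonneg _) (hfw x) hp.le
  have hint : Integrable (fun x => ‖f x‖ ^ p) μ :=
    (hw.const_mul (M ^ p)).mono' (hf.norm.aemeasurable.pow_const p).aestronglyMeasurable <|
      Eventually.of_forall fun x => by
        rw [Real.norm_of_nonneg (by positivity)]
        exact hpt x
  refine ⟨hint, ?_⟩
  have hI : ∫ x, ‖f x‖ ^ p ∂μ ≤ M ^ p * ∫ x, w x ^ p ∂μ :=
    (integral_mono hint (hw.const_mul _) hpt).trans_eq (integral_const_mul _ _)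
  have hW : 0 ≤ ∫ x, w x ^ p ∂μ := integral_nonneg fun x => Real.rpow_nonneg (hw0 x) p
  rw [one_div, Real.rpow_inv_le_iff_of_pos (integral_nonneg fun x => by positivity)
    (by positivity) hp, Real.mul_rpow (by positivity) hM, Real.rpow_inv_rpow hW hp.ne', mul_comm]
  exact hI

theorem norm_le_of_enorm_rpow_le_mul_lintegral (hfp : Integrable (fun x => ‖f x‖ ^ p) μ)
    (hp : 0 < p) {D : ℝ≥0} {y : E} (hy : ‖y‖ₑ ^ p ≤ D * ∫⁻ x, ‖f x‖ₑ ^ p ∂μ) :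
    ‖y‖ ≤ (D : ℝ) ^ (1 / p) * (∫ x, ‖f x‖ ^ p ∂μ) ^ (1 / p) := by
  have hofReal : ∀ z : E, ‖z‖ₑ ^ p = ENNReal.ofReal (‖z‖ ^ p) := fun z => by
    rw [← ofReal_norm, ENNReal.ofReal_rpow_of_nonneg (norm_nonneg _) hp.le]
  have hI : 0 ≤ ∫ x, ‖f x‖ ^ p ∂μ := integral_nonneg fun x => by positivity
  simp_rw [hofReal] at hy
  rw [← ofReal_integral_eq_lintegral_ofReal hfp (Eventually.of_forall fun x => by positivity),
    ← ENNReal.ofReal_coe_nnreal, ← ENNReal.ofReal_mul D.coe_nonneg,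
    ENNReal.ofReal_le_ofReal_iff (by positivity)] at hy
  rw [one_div, ← Real.mul_rpow D.coe_nonneg hI,
    Real.le_rpow_inv_iff_of_pos (norm_nonneg _) (by positivity) hp]
  exact hy

end NormRpow

theorem CohomologicallyAdapted.subset_support {G : Type*} [Group G] [TopologicalSpace G]
    [IsTopologicalGroup G] [LocallyCompactSpace G] [MeasurableSpace G] [BorelSpace G]
    {S : Set G} {μ : Measure G} (hμ : CohomologicallyAdapted S μ) : S ⊆ μ.support := by
  rw [support_eq_forall_isOpen]
  exact fun s hs U hsU hU => hμ.suppContains s hs U hU hsU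

theorem cocycle_norms_equivalent_general
    {G : Type*} [Group G] [TopologicalSpace G] [IsTopologicalGroup G]
    [LocallyCompactSpace G] [SecondCountableTopology G]
    [MeasurableSpace G] [BorelSpace G]
    (S : Set G) (hScpt : IsCompact S)
    (hSgen : ∀ g : G, ∃ n : ℕ, g ∈ S ^ n)
    (μ : MeasureTheory.Measure G) (hμ : CohomologicallyAdapted S μ)
    (p : ℝ) (hp : 1 ≤ p)
    {E : Type*} [NormedAddCommGroup E] [NormedSpace ℝ E]
    (π : G →* (E ≃ₗᵢ[ℝ] E)) :
    ∃ C : ℝ, 1 ≤ C ∧ ∀ b : G → E, Continuous b →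
      (∀ g h : G, b (g * h) = b g + π g (b h)) →
      C⁻¹ * sSup ((fun g => ‖b g‖) '' S) ≤ (∫ g, ‖b g‖ ^ p ∂μ) ^ (1 / p) ∧
        (∫ g, ‖b g‖ ^ p ∂μ) ^ (1 / p) ≤ C * sSup ((fun g => ‖b g‖) '' S) := by
  have := hμ.isProb
  have hp0 : 0 < p := by linarith
  obtain ⟨D, hD⟩ := exists_forall_le_mul_lintegral haar hμ.absCont hScpt hμ.subset_support
    (κ := 2 ^ (p - 1)) (by finiteness)
  set Kp := ∫ g, (wordLength S g : ℝ) ^ p ∂μ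
  set C := max 1 (max (Kp ^ (1 / p)) ((D : ℝ) ^ (1 / p)))
  refine ⟨C, le_max_left _ _, fun b hbc hcoc => ?_⟩
  have hb : IsOneCocycle π b := hcoc
  set M := sSup ((fun g => ‖b g‖) '' S)
  have hM : ∀ s ∈ S, ‖b s‖ ≤ M := fun s hs =>
    le_csSup (hScpt.bddAbove_image (by fun_prop)) (mem_image_of_mem _ hs)
  have hM0 : 0 ≤ M := Real.sSup_nonneg (by rintro _ ⟨g, -, rfl⟩; exact norm_nonneg _)
  obtain ⟨hint, hupper⟩ := integrable_norm_rpow_and_integral_le_of_norm_le_mul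
    hbc.aestronglyMeasurable hp0 (fun g => Nat.cast_nonneg _) (hμ.finiteMoments p hp) hM0
    (hb.norm_le_wordLength_mul hSgen hM)
  have hbS : ∀ g ∈ S, ‖b g‖ₑ ^ p ≤ D * ∫⁻ x, ‖b x‖ₑ ^ p ∂μ :=
    hD (fun g => ‖b g‖ₑ ^ p) (ENNReal.continuous_rpow_const.comp hbc.enorm).measurable
      (fun g => by rw [hb.enorm_inv]) (hb.enorm_rpow_mul_le hp)
  have hlower : ∀ g ∈ S, ‖b g‖ ≤ C * (∫ g, ‖b g‖ ^ p ∂μ) ^ (1 / p) := fun g hg =>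
    (norm_le_of_enorm_rpow_le_mul_lintegral hint hp0 (hbS g hg)).trans
      (by gcongr; exact (le_max_right _ _).trans (le_max_right _ _))
  refine ⟨?_, hupper.trans (by gcongr; exact (le_max_left _ _).trans (le_max_right _ _))⟩
  rw [inv_mul_le_iff₀ (by positivity)]
  exact Real.sSup_le (by rintro _ ⟨g, hg, rfl⟩; exact hlower g hg) (by positivity)

theorem cocycle_norms_equivalent
    {G : Type*} [Group G] [TopologicalSpace G] [IsTopologicalGroup G]
    [LocallyCompactSpace G] [SecondCountableTopology G]
    [MeasurableSpace G] [BorelSpace G]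
    (S : Set G) (hScpt : IsCompact S) (hSsymm : S⁻¹ = S)
    (hSgen : ∀ g : G, ∃ n : ℕ, g ∈ S ^ n)
    (μ : MeasureTheory.Measure G) (hμ : CohomologicallyAdapted S μ)
    (p : ℝ) (hp : 1 ≤ p)
    {E : Type*} [NormedAddCommGroup E] [NormedSpace ℝ E] [CompleteSpace E]
    [TopologicalSpace.SeparableSpace E]
    (π : G →* (E ≃ₗᵢ[ℝ] E)) (hπ : ∀ x : E, Continuous fun g : G => π g x) :
    ∃ C : ℝ, 1 ≤ C ∧ ∀ b : G → E, Continuous b →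
      (∀ g h : G, b (g * h) = b g + π g (b h)) →
      C⁻¹ * sSup ((fun g => ‖b g‖) '' S) ≤ (∫ g, ‖b g‖ ^ p ∂μ) ^ (1 / p) ∧
        (∫ g, ‖b g‖ ^ p ∂μ) ^ (1 / p) ≤ C * sSup ((fun g => ‖b g‖) '' S) :=
  cocycle_norms_equivalent_general S hScpt hSgen μ hμ p hp π
end
end

section
/- Let G be a locally compact second countable, compactly generated group with compact symmetric generating set S, and let μ be a cohomologically adapted probability measure on G. Let p > 1 and c > 0, let E be a real Banach space satisfying the (p,c)-uniform convexity inequality with duality map, let π : G → O(E) be a strongly continuous isometric linear representation, and let b ∈ Z¹(G, π) be a μ-harmonic 1-cocycle. Then for every n ≥ 1: ∫_G ‖b(g)‖^p dμ^{*n}(g) ≥ (c(n−1) + 1) · ∫_G ‖b(g)‖^p dμ(g). -/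
open Pointwise
open scoped ENNReal

noncomputable section

open Classical in
/-- `x^{*_p} = ‖x‖^{p−2}·Jx` for `x ≠ 0`, and `0^{*_p} = 0`. -/
def starMap {E : Type*} [NormedAddCommGroup E] [NormedSpace ℝ E]
    (J : E → StrongDual ℝ E) (p : ℝ) (x : E) : StrongDual ℝ E :=
  if x = 0 then 0 else ‖x‖ ^ (p - 2) • J x

/-- `E` satisfies the `(p,c)`-uniform convexity inequality with duality map `J`:
`J` is continuous, `⟨x, Jx⟩ = ‖x‖²`, `‖Jx‖ = ‖x‖` and
`‖x+y‖^p ≥ ‖x‖^p + p⟨y, x^{*_p}⟩ + c‖y‖^p`. -/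
structure IsConvexDualityMap {E : Type*} [NormedAddCommGroup E] [NormedSpace ℝ E]
    (p c : ℝ) (J : E → StrongDual ℝ E) : Prop where
  continuous : Continuous J
  pairing : ∀ x : E, J x x = ‖x‖ ^ 2
  norm_eq : ∀ x : E, ‖J x‖ = ‖x‖
  ineq : ∀ x y : E, ‖x‖ ^ p + p * starMap J p x y + c * ‖y‖ ^ p ≤ ‖x + y‖ ^ p

/-!
After `n` steps of the random walk, write `b (g * h) = b g + π g (b h)`: since `b` is
`μ`-harmonic, the increment `h ↦ π g (b h)` has mean zero. Integrating the uniform convexity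
inequality `‖x + y‖ ^ p ≥ ‖x‖ ^ p + p ⟨y, x^{*_p}⟩ + c ‖y‖ ^ p` in `h` kills the linear term, so
each further step adds at least `c ∫ ‖b‖ ^ p dμ`. All integrals are finite because
`‖b g‖ ≤ M |g|_S` and `μ` has finite moments.
-/

open MeasureTheory

section WordLength

variable {G : Type*} [Monoid G] {S : Set G} {f : G → ℝ} {M : ℝ}

theorem le_mul_of_mem_pow (hf_one : f 1 ≤ 0) (hf_mul : ∀ g h, f (g * h) ≤ f g + f h)
    (hS : ∀ s ∈ S, f s ≤ M) : ∀ {n : ℕ} {g : G}, g ∈ S ^ n → f g ≤ n * M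
  | 0, g, hg => by
    rw [pow_zero, Set.mem_one] at hg
    simpa [hg] using hf_one
  | n + 1, _, hg => by
    rw [pow_succ] at hg
    obtain ⟨a, ha, s, hs, rfl⟩ := hg
    push_cast
    linarith [hf_mul a s, le_mul_of_mem_pow hf_one hf_mul hS ha, hS s hs]

theorem le_mul_wordLength (hf_one : f 1 ≤ 0) (hf_mul : ∀ g h, f (g * h) ≤ f g + f h)
    (hS : ∀ s ∈ S, f s ≤ M) (hS_gen : ∀ g : G, ∃ n : ℕ, g ∈ S ^ n) (g : G) :
    f g ≤ M * wordLength S g :=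
  mul_comm (wordLength S g : ℝ) M ▸ le_mul_of_mem_pow hf_one hf_mul hS (Nat.sInf_mem (hS_gen g))

end WordLength

section ConvPow

variable {G : Type*} [Monoid G] [MeasurableSpace G] [MeasurableMul₂ G] (μ : Measure G)

instance isProbabilityMeasure_convPow [IsProbabilityMeasure μ] :
    ∀ n, IsProbabilityMeasure (convPow μ n)
  | 0 => by rw [convPow]; infer_instance
  | n + 1 => by
    have := isProbabilityMeasure_convPow n
    rw [convPow]
    exact Measure.isProbabilityMeasure_map measurable_mul.aemeasurable

theorem convPow_one [SFinite μ] : convPow μ 1 = μ := by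
  rw [convPow, convPow, Measure.dirac_prod, Measure.map_map measurable_mul measurable_prodMk_left]
  simp [Function.comp_def]

end ConvPow

theorem CohomologicallyAdapted.memLp_of_norm_le_mul_wordLength {G : Type*} [Group G]
    [TopologicalSpace G] [IsTopologicalGroup G] [LocallyCompactSpace G] [MeasurableSpace G]
    [BorelSpace G] {S : Set G} {μ : Measure G} (hμ : CohomologicallyAdapted S μ)
    {E : Type*} [NormedAddCommGroup E] {f : G → E} (hf : AEStronglyMeasurable f μ)
    {p M : ℝ} (hp : 1 ≤ p) (hM : 0 ≤ M) (hle : ∀ g, ‖f g‖ ≤ M * wordLength S g) :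
    MemLp f (ENNReal.ofReal p) μ := by
  rw [← integrable_norm_rpow_iff hf (by simp; linarith) ENNReal.ofReal_ne_top,
    ENNReal.toReal_ofReal (by linarith)]
  refine ((hμ.finiteMoments p hp).const_mul (M ^ p)).mono'
    (hf.norm.aemeasurable.pow_const p).aestronglyMeasurable (ae_of_all _ fun g => ?_)
  rw [Real.norm_of_nonneg (by positivity), ← Real.mul_rpow hM (Nat.cast_nonneg _)]
  exact Real.rpow_le_rpow (norm_nonneg _) (hle g) (by linarith)

theorem IsConvexDualityMap.norm_rpow_add_mul_integral_le {E : Type*} [NormedAddCommGroup E]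
    [NormedSpace ℝ E] [CompleteSpace E] {p c : ℝ} {J : E → StrongDual ℝ E}
    (hJ : IsConvexDualityMap p c J) (hp : 1 ≤ p) {α : Type*} [MeasurableSpace α]
    {μ : Measure α} [IsProbabilityMeasure μ] {Y : α → E} (hY : MemLp Y (ENNReal.ofReal p) μ)
    (hY_mean : ∫ a, Y a ∂μ = 0) (x : E) :
    ‖x‖ ^ p + c * ∫ a, ‖Y a‖ ^ p ∂μ ≤ ∫ a, ‖x + Y a‖ ^ p ∂μ := by
  have hp_toReal : (ENNReal.ofReal p).toReal = p := ENNReal.toReal_ofReal (by linarith)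
  have hY_int : Integrable Y μ := hY.integrable (ENNReal.one_le_ofReal.2 hp)
  have hY_rpow : Integrable (fun a => ‖Y a‖ ^ p) μ := hp_toReal ▸ hY.integrable_norm_rpow'
  have hxY_rpow : Integrable (fun a => ‖x + Y a‖ ^ p) μ :=
    hp_toReal ▸ ((memLp_const x).add hY).integrable_norm_rpow'
  have hY_pair : Integrable (fun a => starMap J p x (Y a)) μ :=
    (starMap J p x).integrable_comp hY_int
  have hpair_mean : ∫ a, starMap J p x (Y a) ∂μ = 0 := by
    rw [(starMap J p x).integral_comp_comm hY_int, hY_mean, map_zero]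
  have h_affine : Integrable (fun a => ‖x‖ ^ p + p * starMap J p x (Y a)) μ :=
    (integrable_const _).add (hY_pair.const_mul p)
  calc ‖x‖ ^ p + c * ∫ a, ‖Y a‖ ^ p ∂μ
      = ∫ a, (‖x‖ ^ p + p * starMap J p x (Y a) + c * ‖Y a‖ ^ p) ∂μ := by
        rw [integral_add h_affine (hY_rpow.const_mul c),
          integral_add (integrable_const _) (hY_pair.const_mul p), integral_const_mul,
          integral_const_mul, hpair_mean]
        simp
    _ ≤ ∫ a, ‖x + Y a‖ ^ p ∂μ :=
        integral_mono (h_affine.add (hY_rpow.const_mul c)) hxY_rpow fun a => hJ.ineq x (Y a)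

section Cocycle

variable {G : Type*} [Group G] {E : Type*} [NormedAddCommGroup E] [NormedSpace ℝ E]
  {π : G →* (E ≃ₗᵢ[ℝ] E)} {b : G → E}

theorem cocycle_one (hcoc : ∀ g h, b (g * h) = b g + π g (b h)) : b 1 = 0 := by
  simpa using hcoc 1 1

theorem norm_cocycle_mul_le (hcoc : ∀ g h, b (g * h) = b g + π g (b h)) (g h : G) :
    ‖b (g * h)‖ ≤ ‖b g‖ + ‖b h‖ :=
  hcoc g h ▸ (π g).norm_map (b h) ▸ norm_add_le _ _

variable [TopologicalSpace G] [ContinuousMul G] [SecondCountableTopology G]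
  [MeasurableSpace G] [BorelSpace G]

theorem memLp_cocycle_comp_mul (hb : Continuous b) (hcoc : ∀ g h, b (g * h) = b g + π g (b h))
    {q : ℝ≥0∞} {ρ μ : Measure G} [IsFiniteMeasure ρ] [IsFiniteMeasure μ] (hρ : MemLp b q ρ)
    (hμ : MemLp b q μ) : MemLp (fun x : G × G => b (x.1 * x.2)) q (ρ.prod μ) :=
  ((hρ.norm.comp_fst μ).add (hμ.norm.comp_snd ρ)).of_le
    (hb.comp continuous_mul).aestronglyMeasurable <| ae_of_all _ fun x => by
      simpa [Real.norm_of_nonneg (add_nonneg (norm_nonneg (b x.1)) (norm_nonneg (b x.2)))]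
        using norm_cocycle_mul_le hcoc x.1 x.2

theorem memLp_cocycle_convPow (hb : Continuous b) (hcoc : ∀ g h, b (g * h) = b g + π g (b h))
    {q : ℝ≥0∞} {μ : Measure G} [IsProbabilityMeasure μ] (hμ : MemLp b q μ) :
    ∀ n, 1 ≤ n → MemLp b q (convPow μ n) := by
  intro n hn
  induction n, hn using Nat.le_induction with
  | base => rwa [convPow_one]
  | succ n _ ih =>
    rw [convPow, memLp_map_measure_iff hb.aestronglyMeasurable measurable_mul.aemeasurable]
    exact memLp_cocycle_comp_mul hb hcoc ih hμ

variable [CompleteSpace E]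

theorem IsConvexDualityMap.integral_norm_rpow_add_le_convolution {p c : ℝ}
    {J : E → StrongDual ℝ E} (hJ : IsConvexDualityMap p c J) (hp : 1 ≤ p) (hb : Continuous b)
    (hcoc : ∀ g h, b (g * h) = b g + π g (b h)) {ρ μ : Measure G} [IsProbabilityMeasure ρ]
    [IsProbabilityMeasure μ] (hρ : MemLp b (ENNReal.ofReal p) ρ)
    (hμ : MemLp b (ENNReal.ofReal p) μ) (hharm : ∫ g, b g ∂μ = 0) :
    ∫ g, ‖b g‖ ^ p ∂ρ + c * ∫ g, ‖b g‖ ^ p ∂μ ≤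
      ∫ g, ‖b g‖ ^ p ∂(Measure.map (fun x : G × G => x.1 * x.2) (ρ.prod μ)) := by
  have hp_toReal : (ENNReal.ofReal p).toReal = p := ENNReal.toReal_ofReal (by linarith)
  have hρ_rpow : Integrable (fun g => ‖b g‖ ^ p) ρ := hp_toReal ▸ hρ.integrable_norm_rpow'
  have hprod_rpow : Integrable (fun x : G × G => ‖b (x.1 * x.2)‖ ^ p) (ρ.prod μ) :=
    hp_toReal ▸ (memLp_cocycle_comp_mul hb hcoc hρ hμ).integrable_norm_rpow'
  have htranslate (g : G) :
      ‖b g‖ ^ p + c * ∫ h, ‖b h‖ ^ p ∂μ ≤ ∫ h, ‖b (g * h)‖ ^ p ∂μ := by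
    have hmean : ∫ h, π g (b h) ∂μ = 0 := by
      simpa [hharm] using (π g).toLinearIsometry.integral_comp_comm b (μ := μ)
    simpa [hcoc g] using hJ.norm_rpow_add_mul_integral_le hp
      (hμ.continuousLinearMap_comp (π g).toContinuousLinearEquiv.toContinuousLinearMap) hmean (b g)
  calc ∫ g, ‖b g‖ ^ p ∂ρ + c * ∫ h, ‖b h‖ ^ p ∂μ
      = ∫ g, (‖b g‖ ^ p + c * ∫ h, ‖b h‖ ^ p ∂μ) ∂ρ := by
        rw [integral_add hρ_rpow (integrable_const _), integral_const]
        simp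
    _ ≤ ∫ g, ∫ h, ‖b (g * h)‖ ^ p ∂μ ∂ρ :=
        integral_mono (hρ_rpow.add (integrable_const _)) hprod_rpow.integral_prod_left htranslate
    _ = ∫ g, ‖b g‖ ^ p ∂(Measure.map (fun x : G × G => x.1 * x.2) (ρ.prod μ)) := by
        rw [integral_map measurable_mul.aemeasurable
          (hb.norm.rpow_const fun _ => Or.inr (by linarith)).aestronglyMeasurable,
          integral_prod _ hprod_rpow]

end Cocycle

theorem harmonic_cocycle_growth_uniformly_convex_general
    {G : Type*} [Group G] [TopologicalSpace G] [IsTopologicalGroup G]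
    [LocallyCompactSpace G] [SecondCountableTopology G]
    [MeasurableSpace G] [BorelSpace G]
    (S : Set G) (hScpt : IsCompact S)
    (hSgen : ∀ g : G, ∃ n : ℕ, g ∈ S ^ n)
    (μ : MeasureTheory.Measure G) (hμ : CohomologicallyAdapted S μ)
    (p c : ℝ) (hp : 1 < p)
    {E : Type*} [NormedAddCommGroup E] [NormedSpace ℝ E] [CompleteSpace E]
    (hE : ∃ J : E → StrongDual ℝ E, IsConvexDualityMap p c J)
    (π : G →* (E ≃ₗᵢ[ℝ] E))
    (b : G → E) (hb : Continuous b)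
    (hcoc : ∀ g h : G, b (g * h) = b g + π g (b h))
    (hharm : ∫ g, b g ∂μ = 0) :
    ∀ n : ℕ, 1 ≤ n →
      (c * ((n : ℝ) - 1) + 1) * ∫ g, ‖b g‖ ^ p ∂μ
        ≤ ∫ g, ‖b g‖ ^ p ∂(convPow μ n) := by
  obtain ⟨J, hJ⟩ := hE
  have := hμ.isProb
  obtain ⟨M, hM⟩ := hScpt.exists_bound_of_continuousOn hb.continuousOn
  have hword (g : G) : ‖b g‖ ≤ max M 0 * wordLength S g :=
    le_mul_wordLength (by simp [cocycle_one hcoc]) (norm_cocycle_mul_le hcoc)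
      (fun s hs => (hM s hs).trans (le_max_left M 0)) hSgen g
  have hbμ : MemLp b (ENNReal.ofReal p) μ :=
    hμ.memLp_of_norm_le_mul_wordLength hb.aestronglyMeasurable hp.le (le_max_right M 0) hword
  intro n hn
  induction n, hn using Nat.le_induction with
  | base => simp [convPow_one]
  | succ n hn ih =>
    have hstep := hJ.integral_norm_rpow_add_le_convolution hp.le hb hcoc
      (memLp_cocycle_convPow hb hcoc hbμ n hn) hbμ hharm
    rw [convPow]
    push_cast
    linarith

theorem harmonic_cocycle_growth_uniformly_convex
    {G : Type*} [Group G] [TopologicalSpace G] [IsTopologicalGroup G]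
    [LocallyCompactSpace G] [SecondCountableTopology G]
    [MeasurableSpace G] [BorelSpace G]
    (S : Set G) (hScpt : IsCompact S) (hSsymm : S⁻¹ = S)
    (hSgen : ∀ g : G, ∃ n : ℕ, g ∈ S ^ n)
    (μ : MeasureTheory.Measure G) (hμ : CohomologicallyAdapted S μ)
    (p c : ℝ) (hp : 1 < p) (hc : 0 < c)
    {E : Type*} [NormedAddCommGroup E] [NormedSpace ℝ E] [CompleteSpace E]
    (hE : ∃ J : E → StrongDual ℝ E, IsConvexDualityMap p c J)
    (π : G →* (E ≃ₗᵢ[ℝ] E)) (hπ : ∀ x : E, Continuous fun g : G => π g x)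
    (b : G → E) (hb : Continuous b)
    (hcoc : ∀ g h : G, b (g * h) = b g + π g (b h))
    (hharm : ∫ g, b g ∂μ = 0) :
    ∀ n : ℕ, 1 ≤ n →
      (c * ((n : ℝ) - 1) + 1) * ∫ g, ‖b g‖ ^ p ∂μ
        ≤ ∫ g, ‖b g‖ ^ p ∂(convPow μ n) :=
  harmonic_cocycle_growth_uniformly_convex_general S hScpt hSgen μ hμ p c hp hE π b hb hcoc hharm
end
end

section
/- Let H be a real Hilbert space and A : H → H a continuous linear operator with operator norm ‖A‖ ≤ 1 which is self-adjoint (⟪Ax, y⟫ = ⟪x, Ay⟫ for all x, y ∈ H). Then for every ξ ∈ H and every integer n ≥ 1: ⟪ Σ_{j=0}^{n−2} (n−1−j)·A^j ξ, ξ ⟫ ≥ 0 (the sum being empty, hence zero, for n = 1). -/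
/-!
Write `c j = ⟪Aʲ ξ, ξ⟫`. By symmetry `c (2i) = ‖Aⁱ ξ‖² ≥ 0` and `c (2i+1) = ⟪A Aⁱ ξ, Aⁱ ξ⟫`,
which is at least `-‖Aⁱ ξ‖²` because `A` is a contraction. Hence every partial sum of `c`
is nonnegative (group the terms in pairs), and the weighted sum `∑ⱼ (m - j) c j` is the sum of
the first `m` partial sums.
-/

open scoped RealInnerProductSpace

open Finset

theorem Finset.sum_range_nonneg_of_pairs {M : Type*} [AddCommMonoid M] [PartialOrder M]
    [IsOrderedAddMonoid M] {c : ℕ → M} (heven : ∀ i, 0 ≤ c (2 * i))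
    (hpair : ∀ i, 0 ≤ c (2 * i) + c (2 * i + 1)) (k : ℕ) : 0 ≤ ∑ j ∈ range k, c j := by
  have hrange_even : ∀ i, 0 ≤ ∑ j ∈ range (2 * i), c j := by
    intro i
    induction i with
    | zero => simp
    | succ i ih =>
      rw [Nat.mul_succ, sum_range_succ, sum_range_succ, add_assoc]
      exact add_nonneg ih (hpair i)
  obtain ⟨i, rfl | rfl⟩ := Nat.even_or_odd' k
  · exact hrange_even i
  · rw [sum_range_succ]
    exact add_nonneg (hrange_even i) (heven i)

theorem Finset.sum_range_natCast_sub_smul {R M : Type*} [Ring R] [AddCommGroup M] [Module R M]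
    (f : ℕ → M) (m : ℕ) :
    ∑ j ∈ range m, ((m : R) - j) • f j = ∑ k ∈ range m, ∑ j ∈ range (k + 1), f j := by
  induction m with
  | zero => simp
  | succ m ih =>
    have hweight : ∀ j : ℕ, ((m + 1 : ℕ) : R) - j = ((m : R) - j) + 1 := by
      intro j; push_cast; abel
    simp only [hweight, add_smul, one_smul, sum_add_distrib]
    rw [sum_range_succ (fun k => ∑ j ∈ range (k + 1), f j), ← ih,
      sum_range_succ (fun j => ((m : R) - j) • f j), sub_self, zero_smul, add_zero]

theorem neg_sq_norm_le_inner_apply_self {E : Type*} [NormedAddCommGroup E]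
    [InnerProductSpace ℝ E] {T : E →ₗ[ℝ] E} (hT : ∀ x, ‖T x‖ ≤ ‖x‖) (x : E) :
    -‖x‖ ^ 2 ≤ ⟪T x, x⟫ := by
  refine neg_le_of_abs_le ?_
  calc |⟪T x, x⟫| ≤ ‖T x‖ * ‖x‖ := abs_real_inner_le_norm _ _
    _ ≤ ‖x‖ * ‖x‖ := by gcongr; exact hT x
    _ = ‖x‖ ^ 2 := (sq _).symm

namespace LinearMap.IsSymmetric

variable {E : Type*} [NormedAddCommGroup E] [InnerProductSpace ℝ E] {T : E →ₗ[ℝ] E}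

theorem inner_pow_two_mul_apply_self (hT : T.IsSymmetric) (i : ℕ) (x : E) :
    ⟪(T ^ (2 * i)) x, x⟫ = ‖(T ^ i) x‖ ^ 2 := by
  rw [two_mul, pow_add, Module.End.mul_apply, hT.pow i, real_inner_self_eq_norm_sq]

theorem inner_pow_two_mul_add_one_apply_self (hT : T.IsSymmetric) (i : ℕ) (x : E) :
    ⟪(T ^ (2 * i + 1)) x, x⟫ = ⟪T ((T ^ i) x), (T ^ i) x⟫ := by
  rw [two_mul, add_assoc, pow_add, Module.End.mul_apply, hT.pow i, pow_succ',
    Module.End.mul_apply]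

theorem sum_range_inner_pow_apply_self_nonneg (hT : T.IsSymmetric)
    (hT₁ : ∀ x, ‖T x‖ ≤ ‖x‖) (x : E) (k : ℕ) : 0 ≤ ∑ j ∈ Finset.range k, ⟪(T ^ j) x, x⟫ := by
  refine sum_range_nonneg_of_pairs (fun i => ?_) (fun i => ?_) k
  · rw [hT.inner_pow_two_mul_apply_self]
    positivity
  · rw [hT.inner_pow_two_mul_apply_self, hT.inner_pow_two_mul_add_one_apply_self]
    linarith [neg_sq_norm_le_inner_apply_self hT₁ ((T ^ i) x)]

end LinearMap.IsSymmetric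

theorem selfAdjoint_contraction_positivity_general
    {H : Type*} [NormedAddCommGroup H] [InnerProductSpace ℝ H]
    (A : H →L[ℝ] H) (hA : ‖A‖ ≤ 1)
    (hsa : ∀ x y : H, ⟪A x, y⟫ = ⟪x, A y⟫)
    (ξ : H) (n : ℕ) :
    0 ≤ ⟪∑ j ∈ Finset.range (n - 1), ((n : ℝ) - 1 - j) • (A ^ j) ξ, ξ⟫ := by
  obtain _ | m := n
  · simp
  have hT : (A : H →ₗ[ℝ] H).IsSymmetric := hsa
  have hT₁ : ∀ x, ‖(A : H →ₗ[ℝ] H) x‖ ≤ ‖x‖ := fun x => by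
    simpa using A.le_of_opNorm_le hA x
  have hweight : ∀ j : ℕ, ((m + 1 : ℕ) : ℝ) - 1 - j = (m : ℝ) - j := by
    intro j; push_cast; ring
  simp only [hweight, Nat.add_sub_cancel]
  rw [sum_range_natCast_sub_smul, sum_inner]
  refine sum_nonneg fun k _ => ?_
  rw [sum_inner]
  simpa [← ContinuousLinearMap.toLinearMap_pow] using
    hT.sum_range_inner_pow_apply_self_nonneg hT₁ ξ (k + 1)

theorem selfAdjoint_contraction_positivity
    {H : Type*} [NormedAddCommGroup H] [InnerProductSpace ℝ H] [CompleteSpace H]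
    (A : H →L[ℝ] H) (hA : ‖A‖ ≤ 1)
    (hsa : ∀ x y : H, ⟪A x, y⟫ = ⟪x, A y⟫)
    (ξ : H) (n : ℕ) (hn : 1 ≤ n) :
    0 ≤ ⟪∑ j ∈ Finset.range (n - 1), ((n : ℝ) - 1 - j) • (A ^ j) ξ, ξ⟫ :=
  selfAdjoint_contraction_positivity_general A hA hsa ξ n
end
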